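/- If |ε|_∞ ≤ 1/2 and f : ℕ → ℝ is Lipschitz with constant Lip(f), then |Q_ε f - f|_∞ ≤ C Lip(f), where C = Σ_{ℓ≥1} ℓ (3/2)^{ℓ} 2^{-ℓ} = Σ_{ℓ≥1} ℓ (3/4)^{ℓ}. -/

import Mathlib

/-- The cookie transition operator
`Q_ε f (r) = ∑_{ℓ≥1} f(r+ℓ) 2^{-ℓ}(1+ε_{r+1})⋯(1+ε_{r+ℓ-1})(1-ε_{r+ℓ})`. -/
noncomputable def Qeps (ε : ℕ → ℝ) (f : ℕ → ℝ) (r : ℕ) : ℝ :=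
  ∑' ℓ : ℕ, f (r + ℓ + 1) *
    ((2 : ℝ) ^ (-(ℓ + 1 : ℤ)) * (∏ i ∈ Finset.range ℓ, (1 + ε (r + i + 1)))
      * (1 - ε (r + ℓ + 1)))

theorem stmt_8 (ε : ℕ → ℝ) (hε : ∀ i, |ε i| ≤ 1 / 2)
    (f : ℕ → ℝ) (K : ℝ) (hK : 0 ≤ K)
    (hf : ∀ r r' : ℕ, |f r - f r'| ≤ K * |(r : ℝ) - r'|) (r : ℕ) :
    |Qeps ε f r - f r| ≤ (∑' ℓ : ℕ, ((ℓ : ℝ) + 1) * (3 / 4 : ℝ) ^ (ℓ + 1)) * K := by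
  set P : ℕ → ℝ := fun ℓ => ∏ i ∈ Finset.range ℓ, (1 + ε (r + i + 1)) with hP
  set c : ℕ → ℝ := fun ℓ => (1 / 2 : ℝ) ^ (ℓ + 1) * P ℓ * (1 - ε (r + ℓ + 1)) with hc
  -- rewrite Qeps in terms of c
  have hzp : ∀ ℓ : ℕ, (2 : ℝ) ^ (-(ℓ + 1 : ℤ)) = (1 / 2 : ℝ) ^ (ℓ + 1) := by
    intro ℓ
    have h : (-(ℓ + 1 : ℤ)) = -((ℓ + 1 : ℕ) : ℤ) := by push_cast; ring
    rw [h, zpow_neg, zpow_natCast, ← inv_pow, one_div]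
  have hQ : Qeps ε f r = ∑' ℓ : ℕ, f (r + ℓ + 1) * c ℓ := by
    unfold Qeps
    congr 1
    funext ℓ
    rw [hzp ℓ]
  -- bounds
  have hPb : ∀ ℓ, |P ℓ| ≤ (3 / 2 : ℝ) ^ ℓ := by
    intro ℓ
    rw [hP]
    rw [Finset.abs_prod]
    calc ∏ i ∈ Finset.range ℓ, |1 + ε (r + i + 1)|
        ≤ ∏ i ∈ Finset.range ℓ, (3 / 2 : ℝ) := by
          apply Finset.prod_le_prod (fun i _ => abs_nonneg _)
          intro i _
          have h := hε (r + i + 1)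
          calc |1 + ε (r + i + 1)| ≤ |(1 : ℝ)| + |ε (r + i + 1)| := abs_add_le _ _
            _ ≤ 1 + 1 / 2 := by rw [abs_one]; linarith
            _ = 3 / 2 := by norm_num
      _ = (3 / 2 : ℝ) ^ ℓ := by rw [Finset.prod_const, Finset.card_range]
  have hcb : ∀ ℓ, |c ℓ| ≤ (3 / 4 : ℝ) ^ (ℓ + 1) := by
    intro ℓ
    have h := hε (r + ℓ + 1)
    have h1 : |1 - ε (r + ℓ + 1)| ≤ 3 / 2 := by
      calc |1 - ε (r + ℓ + 1)| ≤ |(1 : ℝ)| + |ε (r + ℓ + 1)| := abs_sub _ _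
        _ ≤ 3 / 2 := by rw [abs_one]; linarith
    have h2 : |(1 / 2 : ℝ) ^ (ℓ + 1)| = (1 / 2 : ℝ) ^ (ℓ + 1) := by
      rw [abs_of_nonneg]; positivity
    calc |c ℓ| = |(1 / 2 : ℝ) ^ (ℓ + 1)| * |P ℓ| * |1 - ε (r + ℓ + 1)| := by
          rw [hc]; rw [abs_mul, abs_mul]
      _ ≤ (1 / 2 : ℝ) ^ (ℓ + 1) * (3 / 2) ^ ℓ * (3 / 2) := by
          rw [h2]
          exact mul_le_mul (mul_le_mul_of_nonneg_left (hPb ℓ) (by positivity)) h1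
            (abs_nonneg _) (by positivity)
      _ = (3 / 4 : ℝ) ^ (ℓ + 1) := by
          rw [show (3 / 4 : ℝ) ^ (ℓ + 1) = ((1 / 2 : ℝ) * (3 / 2)) ^ (ℓ + 1) by norm_num,
            mul_pow, pow_succ (3 / 2 : ℝ)]
          ring
  have hgsum : Summable (fun ℓ : ℕ => (3 / 4 : ℝ) ^ (ℓ + 1)) := by
    simpa [pow_succ'] using
      (summable_geometric_of_lt_one (by norm_num : (0:ℝ) ≤ 3/4) (by norm_num)).mul_left (3/4 : ℝ)
  have hcsum : Summable c := by
    apply Summable.of_norm_bounded hgsum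
    intro ℓ
    simpa [Real.norm_eq_abs] using hcb ℓ
  -- telescoping sum of c
  have htel : ∀ n : ℕ, ∑ i ∈ Finset.range n, c i = 1 - (1 / 2 : ℝ) ^ n * P n := by
    intro n
    induction n with
    | zero => simp [hP]
    | succ n ih =>
      rw [Finset.sum_range_succ, ih, hc]
      have : P (n + 1) = P n * (1 + ε (r + n + 1)) := by
        rw [hP]; exact Finset.prod_range_succ _ _
      rw [this]
      ring
  have htendsto : Filter.Tendsto (fun n => ∑ i ∈ Finset.range n, c i) Filter.atTop (nhds 1) := by
    simp only [htel]
    have h0 : Filter.Tendsto (fun n : ℕ => (1 / 2 : ℝ) ^ n * P n) Filter.atTop (nhds 0) := by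
      refine squeeze_zero_norm (a := fun n : ℕ => (3 / 4 : ℝ) ^ n) (fun n => ?_)
        (tendsto_pow_atTop_nhds_zero_of_lt_one (by norm_num) (by norm_num))
      rw [Real.norm_eq_abs, abs_mul, abs_of_nonneg (by positivity : (0:ℝ) ≤ (1/2:ℝ)^n)]
      calc (1 / 2 : ℝ) ^ n * |P n| ≤ (1 / 2 : ℝ) ^ n * (3 / 2) ^ n :=
            mul_le_mul_of_nonneg_left (hPb n) (by positivity)
        _ = (3 / 4 : ℝ) ^ n := by rw [← mul_pow]; norm_num
    have := Filter.Tendsto.sub (tendsto_const_nhds (x := (1:ℝ))) h0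
    simpa using this
  have hcsum1 : ∑' ℓ, c ℓ = 1 := by
    have := (hcsum.hasSum_iff_tendsto_nat).mpr htendsto
    exact this.tsum_eq
  -- summability of f * c
  have hfb : ∀ ℓ : ℕ, |f (r + ℓ + 1) - f r| ≤ K * ((ℓ : ℝ) + 1) := by
    intro ℓ
    have := hf (r + ℓ + 1) r
    have heq : |((r + ℓ + 1 : ℕ) : ℝ) - (r : ℝ)| = (ℓ : ℝ) + 1 := by
      push_cast
      rw [show (r : ℝ) + ℓ + 1 - r = (ℓ : ℝ) + 1 by ring, abs_of_nonneg (by positivity)]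
    rw [heq] at this
    exact this
  have h1sum : Summable (fun ℓ : ℕ => f (r + ℓ + 1) * c ℓ) := by
    have hpoly : Summable (fun ℓ : ℕ => ((ℓ : ℝ) + 1) * (3 / 4 : ℝ) ^ (ℓ + 1)) := by
      have hg : Summable (fun n : ℕ => (n : ℝ) ^ 1 * (3 / 4 : ℝ) ^ n) :=
        summable_pow_mul_geometric_of_norm_lt_one 1
          (by rw [Real.norm_eq_abs, abs_of_pos (by norm_num : (0:ℝ) < 3/4)]; norm_num)
      have := (summable_nat_add_iff 1).mpr hg
      simpa [pow_one] using this
    apply Summable.of_norm_bounded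
      (g := fun ℓ : ℕ => (|f r| + K * ((ℓ : ℝ) + 1)) * (3 / 4 : ℝ) ^ (ℓ + 1))
    · have : Summable (fun ℓ : ℕ => |f r| * (3 / 4 : ℝ) ^ (ℓ + 1) +
          K * (((ℓ : ℝ) + 1) * (3 / 4 : ℝ) ^ (ℓ + 1))) :=
        (hgsum.mul_left _).add (hpoly.mul_left K)
      apply this.congr
      intro ℓ; ring
    · intro ℓ
      rw [Real.norm_eq_abs, abs_mul]
      have hb := hfb ℓ
      have habs : |f (r + ℓ + 1)| ≤ |f (r + ℓ + 1) - f r| + |f r| := by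
        have := abs_add_le (f (r + ℓ + 1) - f r) (f r)
        simpa using this
      have hmain : |f (r + ℓ + 1)| ≤ |f r| + K * ((ℓ : ℝ) + 1) := by linarith
      have hnn : (0:ℝ) ≤ |f r| + K * ((ℓ : ℝ) + 1) :=
        add_nonneg (abs_nonneg _) (mul_nonneg hK (by positivity))
      exact mul_le_mul hmain (hcb ℓ) (abs_nonneg _) hnn
  have hd : Summable (fun ℓ : ℕ => (f (r + ℓ + 1) - f r) * c ℓ) := by
    have := h1sum.sub (hcsum.mul_left (f r))
    apply this.congr
    intro ℓ; ring
  -- rewrite the difference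
  have hdiff : Qeps ε f r - f r = ∑' ℓ : ℕ, (f (r + ℓ + 1) - f r) * c ℓ := by
    have h2 : ∑' ℓ : ℕ, (f (r + ℓ + 1) - f r) * c ℓ
        = (∑' ℓ : ℕ, f (r + ℓ + 1) * c ℓ) - ∑' ℓ : ℕ, f r * c ℓ := by
      rw [← Summable.tsum_sub h1sum (hcsum.mul_left (f r))]
      congr 1; funext ℓ; ring
    rw [hQ, h2, tsum_mul_left, hcsum1, mul_one]
  rw [hdiff]
  have hRHSsum : Summable (fun ℓ : ℕ => ((ℓ : ℝ) + 1) * (3 / 4 : ℝ) ^ (ℓ + 1) * K) := by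
    have hg : Summable (fun n : ℕ => (n : ℝ) ^ 1 * (3 / 4 : ℝ) ^ n) :=
      summable_pow_mul_geometric_of_norm_lt_one 1
        (by rw [Real.norm_eq_abs, abs_of_pos (by norm_num : (0:ℝ) < 3/4)]; norm_num)
    have := ((summable_nat_add_iff 1).mpr hg).mul_right K
    simpa [pow_one] using this
  calc |∑' ℓ : ℕ, (f (r + ℓ + 1) - f r) * c ℓ|
      ≤ ∑' ℓ : ℕ, |(f (r + ℓ + 1) - f r) * c ℓ| := by
        simpa only [Real.norm_eq_abs] using
          norm_tsum_le_tsum_norm (f := fun ℓ : ℕ => (f (r + ℓ + 1) - f r) * c ℓ)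
            (by simpa only [Real.norm_eq_abs] using hd.abs)
    _ ≤ ∑' ℓ : ℕ, ((ℓ : ℝ) + 1) * (3 / 4 : ℝ) ^ (ℓ + 1) * K := by
        apply Summable.tsum_le_tsum _ hd.abs hRHSsum
        intro ℓ
        rw [abs_mul]
        calc |f (r + ℓ + 1) - f r| * |c ℓ|
            ≤ (K * ((ℓ : ℝ) + 1)) * (3 / 4 : ℝ) ^ (ℓ + 1) :=
              mul_le_mul (hfb ℓ) (hcb ℓ) (abs_nonneg _) (by positivity)
          _ = ((ℓ : ℝ) + 1) * (3 / 4 : ℝ) ^ (ℓ + 1) * K := by ring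
    _ = (∑' ℓ : ℕ, ((ℓ : ℝ) + 1) * (3 / 4 : ℝ) ^ (ℓ + 1)) * K := tsum_mul_right
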